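/- arXiv:1703.02770 — 2 statements merged into one kernel-verified Lean document; each statement's English description precedes it below -/
import Mathlib

section
/- Let (Z, R) → (T, t) be an abstract smoothing of a finite k-scheme R and let η be the generic point of T. Let T' be an irreducible k-scheme with a morphism f : T' → T such that η lies in the set-theoretic image of f and there exists a k-rational point t' of T' with f ∘ t' = t as morphisms Spec k → T. Then the base change Z ×_T T' → T' is an abstract smoothing of R, with special point t'. -/
open AlgebraicGeometry CategoryTheory CategoryTheory.Limits

noncomputable section

universe u

/-- `Spec k` as a scheme. -/
abbrev SpecOf (k : Type u) [CommRing k] : Scheme.{u} := Spec (CommRingCat.of k)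

/-- A morphism of schemes is flat if all induced maps on stalks are flat ring maps. -/
def SchemeHomFlat {X Y : Scheme.{u}} (f : X ⟶ Y) : Prop :=
  ∀ x : X, letI := (f.stalkMap x).hom.toAlgebra
    Module.Flat (Y.presheaf.stalk (f.base x)) (X.presheaf.stalk x)

/-- An abstract smoothing of a scheme `R` over a base scheme `S` (typically `S = Spec k`
for a field `k`; then `pt` is precisely a `k`-rational point of the irreducible,
separated, locally Noetherian base `T`, the family `π : Z ⟶ T` is finite and flat,
its fibre over `pt` is identified with `R` as a `k`-scheme, and its fibre over the
generic point `η` of `T` is smooth over the residue field `κ(η)`). -/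
structure AbstractSmoothing (S : Scheme.{u}) {R : Scheme.{u}} (sR : R ⟶ S) : Type (u + 1) where
  T : Scheme.{u}
  Z : Scheme.{u}
  sT : T ⟶ S
  irr : IrreducibleSpace T
  locNoeth : IsLocallyNoetherian T
  sep : IsSeparated sT
  π : Z ⟶ T
  flat : SchemeHomFlat π
  finite : IsFinite π
  pt : S ⟶ T
  pt_section : pt ≫ sT = 𝟙 S
  fiberIso : pullback π pt ≅ R
  fiberIso_over : fiberIso.inv ≫ pullback.snd π pt = sR
  genericSmooth : ∀ η : T, closure ({η} : Set T) = Set.univ →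
    IsSmooth (pullback.snd π (T.fromSpecResidueField η))

/-- A scheme `R`, given with its structure morphism `sR` to `S = Spec k`, is abstractly
smoothable over `k` if it admits an abstract smoothing. -/
def IsAbstractlySmoothable (S : Scheme.{u}) {R : Scheme.{u}} (sR : R ⟶ S) : Prop :=
  Nonempty (AbstractSmoothing S sR)

/-- An embedded smoothing of a closed subscheme `ι : R ⟶ X` inside `X`, over the base
`S = Spec k`: a closed subscheme `Z ⊆ X ×ₖ T` such that the projection `Z ⟶ T` is an
abstract smoothing of `R`, the fibre over the `k`-rational point `pt` being identified
with `R` compatibly with the embeddings into `X`. -/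
structure EmbeddedSmoothing (S : Scheme.{u}) {R X : Scheme.{u}} (sX : X ⟶ S) (ι : R ⟶ X) :
    Type (u + 1) where
  T : Scheme.{u}
  sT : T ⟶ S
  irr : IrreducibleSpace T
  locNoeth : IsLocallyNoetherian T
  sep : IsSeparated sT
  Z : Scheme.{u}
  ζ : Z ⟶ pullback sX sT
  closedImm : IsClosedImmersion ζ
  flat : SchemeHomFlat (ζ ≫ pullback.snd sX sT)
  finite : IsFinite (ζ ≫ pullback.snd sX sT)
  pt : S ⟶ T
  pt_section : pt ≫ sT = 𝟙 S
  fiberIso : pullback (ζ ≫ pullback.snd sX sT) pt ≅ R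
  fiberIso_comm : fiberIso.hom ≫ ι =
    pullback.fst (ζ ≫ pullback.snd sX sT) pt ≫ ζ ≫ pullback.fst sX sT
  genericSmooth : ∀ η : T, closure ({η} : Set T) = Set.univ →
    IsSmooth (pullback.snd (ζ ≫ pullback.snd sX sT) (T.fromSpecResidueField η))

/-- `R` is smoothable inside `X` (embedded smoothable). -/
def IsEmbeddedSmoothable (S : Scheme.{u}) {R X : Scheme.{u}} (sX : X ⟶ S) (ι : R ⟶ X) : Prop :=
  Nonempty (EmbeddedSmoothing S sX ι)

/-! Flatness, finiteness and smoothness are stable under base change, and base changing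
`Z → T` first along `f` and then along a point `g` of `T'` is base changing it along `g ≫ f`.
So the fibre over `pt'` is the fibre over `pt`, and the fibre over the generic point `η'` of
`T'` is a base change of the fibre over `f η'`, which is the generic point of `T` because
`f` has dense image. -/

lemma schemeHomFlat_iff_flat {X Y : Scheme.{u}} (f : X ⟶ Y) : SchemeHomFlat f ↔ Flat f :=
  (Flat.iff_flat_stalkMap f).symm

lemma SchemeHomFlat.pullback_snd {X Y S : Scheme.{u}} {f : X ⟶ S} (hf : SchemeHomFlat f)
    (g : Y ⟶ S) : SchemeHomFlat (pullback.snd f g) := by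
  rw [schemeHomFlat_iff_flat] at hf ⊢
  infer_instance

lemma IsGenericPoint.apply_of_mem_range {X Y : Type*} [TopologicalSpace X] [TopologicalSpace Y]
    {f : X → Y} (hf : Continuous f) {x : X} (hx : IsGenericPoint x Set.univ) {y : Y}
    (hy : IsGenericPoint y Set.univ) (hyf : y ∈ Set.range f) :
    IsGenericPoint (f x) Set.univ := by
  have hdense : closure (Set.range f) = Set.univ :=
    Set.eq_univ_of_univ_subset (hy ▸ closure_mono (Set.singleton_subset_iff.mpr hyf))
  simpa [Set.image_univ, hdense] using hx.image hf

namespace CategoryTheory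

variable {C : Type*} [Category C] [HasPullbacks C] {Z T T' S : C}

lemma Limits.exists_pullback_snd_pullback_snd_iso (π : Z ⟶ T) (f : T' ⟶ T) {g : S ⟶ T'}
    {t : S ⟶ T} (h : g ≫ f = t) : ∃ e : pullback (pullback.snd π f) g ≅ pullback π t,
      e.inv ≫ pullback.snd (pullback.snd π f) g = pullback.snd π t := by
  subst h
  exact ⟨pullbackLeftPullbackSndIso π f g, by simp⟩

lemma MorphismProperty.pullback_snd_pullback_snd_iff (P : MorphismProperty C) [P.RespectsIso]
    (π : Z ⟶ T) (f : T' ⟶ T) {g : S ⟶ T'} {t : S ⟶ T} (h : g ≫ f = t) :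
    P (pullback.snd (pullback.snd π f) g) ↔ P (pullback.snd π t) := by
  subst h
  rw [← pullbackLeftPullbackSndIso_hom_snd π f g, P.cancel_left_of_respectsIso]

end CategoryTheory

theorem base_change_of_abstract_smoothing_general
    {k : Type u} [Field k] {R : Scheme.{u}} (sR : R ⟶ SpecOf k)
    (sm : AbstractSmoothing (SpecOf k) sR)
    (T' : Scheme.{u})
    (f : T' ⟶ sm.T)
    (hη : ∀ η : sm.T, closure ({η} : Set sm.T) = Set.univ → η ∈ Set.range f.base)
    (pt' : SpecOf k ⟶ T') (hpt' : pt' ≫ f = sm.pt) :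
    SchemeHomFlat (pullback.snd sm.π f) ∧
    IsFinite (pullback.snd sm.π f) ∧
    (∃ e : pullback (pullback.snd sm.π f) pt' ≅ R,
      e.inv ≫ pullback.snd (pullback.snd sm.π f) pt' = sR) ∧
    (∀ η' : T', closure ({η'} : Set T') = Set.univ →
      IsSmooth (pullback.snd (pullback.snd sm.π f) (T'.fromSpecResidueField η'))) := by
  have := sm.irr
  have := sm.finite
  refine ⟨sm.flat.pullback_snd f, inferInstance, ?_, fun η' hη' => ?_⟩
  · obtain ⟨e, he⟩ := exists_pullback_snd_pullback_snd_iso sm.π f hpt'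
    exact ⟨e ≪≫ sm.fiberIso, by simp [he, sm.fiberIso_over]⟩
  · have hgen : closure {f.base η'} = Set.univ :=
      IsGenericPoint.apply_of_mem_range f.base.hom.continuous hη' (genericPoint_spec sm.T)
        (hη _ (genericPoint_spec sm.T))
    have : MorphismProperty.RespectsIso @Smooth :=
      MorphismProperty.IsStableUnderBaseChange.respectsIso
    have : Smooth (pullback.snd sm.π (sm.T.fromSpecResidueField (f.base η'))) :=
      sm.genericSmooth _ hgen
    change Smooth _
    rw [MorphismProperty.pullback_snd_pullback_snd_iff @Smooth sm.π f
        (Scheme.Hom.SpecMap_residueFieldMap_fromSpecResidueField f η').symm,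
      ← MorphismProperty.pullback_snd_pullback_snd_iff @Smooth sm.π _ rfl]
    infer_instance

/-- **Base change for smoothings.**  Let `(Z, R) → (T, t)` be an abstract
smoothing of a finite `k`-scheme `R` (packaged as `sm : AbstractSmoothing (SpecOf k) sR`).
Let `T'` be an irreducible (separated, locally Noetherian) `k`-scheme with a `k`-morphism
`f : T' ⟶ T` such that the generic point `η` of `T` lies in the set-theoretic image of `f`
and such that there is a `k`-rational point `pt'` of `T'` with `pt' ≫ f = pt`.  Then the
base change `Z ×_T T' → T'` is an abstract smoothing of `R` with special point `pt'`:
it is flat and finite, its fibre over `pt'` is identified with `R` as a `k`-scheme, and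
its fibre over the generic point of `T'` is smooth. -/
theorem base_change_of_abstract_smoothing
    {k : Type u} [Field k] {R : Scheme.{u}} (sR : R ⟶ SpecOf k) [IsFinite sR]
    (sm : AbstractSmoothing (SpecOf k) sR)
    (T' : Scheme.{u}) [IrreducibleSpace T'] [IsLocallyNoetherian T']
    (sT' : T' ⟶ SpecOf k) [IsSeparated sT']
    (f : T' ⟶ sm.T) (hf_over : f ≫ sm.sT = sT')
    (hη : ∀ η : sm.T, closure ({η} : Set sm.T) = Set.univ → η ∈ Set.range f.base)
    (pt' : SpecOf k ⟶ T') (hpt' : pt' ≫ f = sm.pt) :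
    SchemeHomFlat (pullback.snd sm.π f) ∧
    IsFinite (pullback.snd sm.π f) ∧
    (∃ e : pullback (pullback.snd sm.π f) pt' ≅ R,
      e.inv ≫ pullback.snd (pullback.snd sm.π f) pt' = sR) ∧
    (∀ η' : T', closure ({η'} : Set T') = Set.univ →
      IsSmooth (pullback.snd (pullback.snd sm.π f) (T'.fromSpecResidueField η'))) :=
  base_change_of_abstract_smoothing_general sR sm T' f hη pt' hpt'
end
end

section
/- Let X and X' be schemes of finite type over k, and let S ⊆ X and S' ⊆ X' be Zariski-dense subsets consisting of k-rational points (points whose residue field equals k). Then the subset S × S' of X ×_{Spec k} X', consisting of the images of the induced morphisms s ×_k s' : Spec k → X ×_{Spec k} X' for s ∈ S and s' ∈ S', is Zariski-dense in X ×_{Spec k} X'. -/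
/-!
Any morphism to the spectrum of a field is universally open, so the projection
`X ×ₖ X' ⟶ X` is an open map and the preimage of the dense set `S` is dense. The fibre of this
projection over a rational point `s` is the image of the section `X' ⟶ X ×ₖ X'`,
`x' ↦ (s, x')`, which carries the dense set `S'` into `S × S'`; hence every such fibre lies in
the closure of `S × S'`.
-/

open AlgebraicGeometry CategoryTheory CategoryTheory.Limits

noncomputable section

universe u

lemma IsOpenMap.dense_of_fiber_subset_closure {P X : Type*} [TopologicalSpace P]
    [TopologicalSpace X] {π : P → X} (hπ : IsOpenMap π) {D : Set X} (hD : Dense D) {E : Set P}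
    (hE : ∀ x ∈ D, π ⁻¹' {x} ⊆ closure E) : Dense E :=
  dense_closure.mp <| (hD.preimage hπ).mono fun _ hz ↦ hE _ hz rfl

lemma CategoryTheory.Limits.pullback.comp_lift_eq_lift_of_section {C : Type*} [Category C]
    {X Y Z : C} {f : X ⟶ Z} {g : Y ⟶ Z} [HasPullback f g] {s : Z ⟶ X} (hs : s ≫ f = 𝟙 Z)
    {t : Z ⟶ Y} (ht : t ≫ g = 𝟙 Z) :
    t ≫ pullback.lift (g ≫ s) (𝟙 Y) (by rw [Category.assoc, hs, Category.comp_id,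
      Category.id_comp]) = pullback.lift s t (by rw [hs, ht]) := by
  apply pullback.hom_ext
  · rw [Category.assoc, pullback.lift_fst, pullback.lift_fst, reassoc_of% ht]
  · rw [Category.assoc, pullback.lift_snd, pullback.lift_snd, Category.comp_id]

lemma AlgebraicGeometry.Scheme.Pullback.preimage_fst_range_subset_range_lift
    {X Y Z : Scheme.{u}} {f : X ⟶ Z} (g : Y ⟶ Z) {s : Z ⟶ X} (hs : s ≫ f = 𝟙 Z) :
    pullback.fst f g ⁻¹' Set.range s ⊆ Set.range (pullback.lift (g ≫ s) (𝟙 Y)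
      (by rw [Category.assoc, hs, Category.comp_id, Category.id_comp])) := by
  have e₁ : 𝟙 Z ≫ 𝟙 Z = s ≫ f := by rw [hs, Category.comp_id]
  have e₂ : g ≫ 𝟙 Z = 𝟙 Y ≫ g := by rw [Category.comp_id, Category.id_comp]
  have e₃ : (g ≫ s) ≫ f = 𝟙 Y ≫ g := by
    rw [Category.assoc, hs, Category.comp_id, Category.id_comp]
  have hfac : pullback.map (𝟙 Z) g f g s (𝟙 Y) (𝟙 Z) e₁ e₂ =
      pullback.snd (𝟙 Z) g ≫ pullback.lift (g ≫ s) (𝟙 Y) e₃ := by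
    apply pullback.hom_ext
    · rw [pullback.lift_fst, Category.assoc, pullback.lift_fst, ← pullback.condition_assoc,
        Category.id_comp]
    · rw [pullback.lift_snd, Category.assoc, pullback.lift_snd]
  intro z hz
  obtain ⟨w, rfl⟩ : z ∈ Set.range (pullback.map (𝟙 Z) g f g s (𝟙 Y) (𝟙 Z) e₁ e₂) := by
    rw [range_map]
    exact ⟨hz, _, rfl⟩
  exact ⟨pullback.snd (𝟙 Z) g w, by rw [← Scheme.Hom.comp_apply, ← hfac]⟩

/-- Let `X` and `X'` be schemes of finite type over `k`, and let
`S` and `S'` be families of `k`-rational points of `X` resp. `X'` (encoded as sections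
of the structure morphisms) whose underlying sets of points are Zariski-dense in `X`
resp. `X'`.  Then the set of points of `X ×_{Spec k} X'` of the form `s ×_k s'` for
`s ∈ S`, `s' ∈ S'` is Zariski-dense in `X ×_{Spec k} X'`. -/
theorem dense_product_of_dense_rational_points
    {k : Type u} [Field k] {X X' : Scheme.{u}}
    (sX : X ⟶ SpecOf k) (sX' : X' ⟶ SpecOf k)
    (S : Set {p : SpecOf k ⟶ X // p ≫ sX = 𝟙 (SpecOf k)})
    (S' : Set {p : SpecOf k ⟶ X' // p ≫ sX' = 𝟙 (SpecOf k)})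
    (hS : Dense (⋃ p ∈ S, Set.range (p : {p : SpecOf k ⟶ X // p ≫ sX = 𝟙 (SpecOf k)}).1.base))
    (hS' : Dense (⋃ p ∈ S', Set.range
      (p : {p : SpecOf k ⟶ X' // p ≫ sX' = 𝟙 (SpecOf k)}).1.base)) :
    Dense (⋃ p ∈ S, ⋃ p' ∈ S',
      Set.range (pullback.lift p.1 p'.1
        (by rw [p.2, p'.2]) : SpecOf k ⟶ pullback sX sX').base) := by
  refine (pullback.fst sX sX').isOpenMap.dense_of_fiber_subset_closure hS ?_
  simp only [Set.mem_iUnion]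
  rintro _ ⟨p, hp, pt, rfl⟩
  let slice : X' ⟶ pullback sX sX' := pullback.lift (sX' ≫ p.1) (𝟙 X') (by simp [p.2])
  calc (pullback.fst sX sX').base ⁻¹' {p.1.base pt}
      ⊆ pullback.fst sX sX' ⁻¹' Set.range p.1 :=
        Set.preimage_mono (Set.singleton_subset_iff.mpr ⟨pt, rfl⟩)
    _ ⊆ Set.range slice := Scheme.Pullback.preimage_fst_range_subset_range_lift sX' p.2
    _ ⊆ closure (slice '' ⋃ p' ∈ S', Set.range p'.1.base) :=
      slice.continuous.range_subset_closure_image_dense hS'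
    _ ⊆ _ := by
      refine closure_mono ?_
      rintro _ ⟨_, hx', rfl⟩
      simp only [Set.mem_iUnion] at hx' ⊢
      obtain ⟨p', hp', pt', rfl⟩ := hx'
      refine ⟨p, hp, p', hp', pt', ?_⟩
      rw [← Scheme.Hom.comp_apply, pullback.comp_lift_eq_lift_of_section p.2 p'.2]
end
end
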